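/- For q ∈ ℂ[u, t, t⁻¹], the operator q·(t∂_t) maps A into A if and only if q ∈ A. (Part 2 of the Lemma on derivations of the cone; t∂_t corresponds to the angular derivation ∂_θ under t = e^{iθ}.) -/

import Mathlib

/-- The ring `ℂ[u, t, t⁻¹]` of polynomials in `u` that are Laurent polynomials
in `t`, realized as the monoid algebra of `ℕ × ℤ` over `ℂ`. -/
abbrev PolyLaurent : Type := AddMonoidAlgebra ℂ (ℕ × ℤ)

/-- The monomial `uⁿ tᵐ` in `ℂ[u, t, t⁻¹]`. -/
noncomputable def mono (n : ℕ) (m : ℤ) : PolyLaurent :=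
  AddMonoidAlgebra.single (n, m) 1

/-- The coordinate ring `A` of the double cone `z² = x² + y²`: the subalgebra
of `ℂ[u, t, t⁻¹]` generated by `u`, `u·t` and `u·t⁻¹` (after the complex
rotation `x+iy, x−iy, z ↦ ut, ut⁻¹, u`). -/
noncomputable def coneA : Subalgebra ℂ PolyLaurent :=
  Algebra.adjoin ℂ {mono 1 0, mono 1 1, mono 1 (-1)}

/-- The derivation `t∂_t` of `ℂ[u, t, t⁻¹]`, sending `uⁿtᵐ` to `m·uⁿtᵐ`
(the angular derivation `∂_θ` under `t = e^{iθ}`). -/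
noncomputable def tdt : PolyLaurent →ₗ[ℂ] PolyLaurent :=
  (Finsupp.lsum ℂ fun (p : ℕ × ℤ) => (p.2 : ℂ) • (AddMonoidAlgebra.lsingle p : ℂ →ₗ[ℂ] PolyLaurent)) ∘ₗ
    (AddMonoidAlgebra.coeffLinearEquiv ℂ : PolyLaurent ≃ₗ[ℂ] ((ℕ × ℤ) →₀ ℂ)).toLinearMap

/-!
`A` is the monoid algebra of the lattice cone `{(n, m) : |m| ≤ n}` (generated as a monoid by
`(1, 0)`, `(1, 1)`, `(1, -1)`): an element lies in `A` exactly when its support lies in the cone.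
As `t∂_t` is diagonal on monomials it never enlarges supports, so `q ∈ A` suffices.
Conversely, applying `q·t∂_t` to `u t` and `u t⁻¹` shows `q·u t ∈ A` and `q·u t⁻¹ ∈ A`;
for a monomial `uⁿtᵐ` of `q` this gives `|m + 1| ≤ n + 1` and `|m - 1| ≤ n + 1`, hence `|m| ≤ n`.
-/

namespace AddMonoidAlgebra

variable {R M : Type*} [CommSemiring R]

theorem single_one_mem_supported {s : Set M} {m : M} (hm : m ∈ s) :
    single m (1 : R) ∈ supported R R s := by
  rw [supported_eq_span_single]
  exact Submodule.subset_span ⟨m, hm, rfl⟩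

variable [AddMonoid M]

variable (R) in
noncomputable def supportedSubalgebra (N : AddSubmonoid M) : Subalgebra R R[M] :=
  (supported R R (N : Set M)).toSubalgebra (single_one_mem_supported N.zero_mem)
    fun x y hx hy => by
      classical
      refine (Finset.coe_subset.2 (support_coeff_mul_subset x y)).trans ?_
      rintro _ hp
      obtain ⟨a, ha, b, hb, rfl⟩ := Finset.mem_add.1 hp
      exact N.add_mem (hx ha) (hy hb)

theorem mem_supportedSubalgebra {N : AddSubmonoid M} {x : R[M]} :
    x ∈ supportedSubalgebra R N ↔ x ∈ supported R R (N : Set M) :=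
  Submodule.mem_toSubalgebra

theorem adjoin_of'_eq_supportedSubalgebra (S : Set M) :
    Algebra.adjoin R (of' R M '' S) = supportedSubalgebra R (AddSubmonoid.closure S) := by
  refine le_antisymm (Algebra.adjoin_le ?_) fun x hx => ?_
  · rintro _ ⟨m, hm, rfl⟩
    exact mem_supportedSubalgebra.2 (single_one_mem_supported (AddSubmonoid.subset_closure hm))
  · have hx' := mem_supportedSubalgebra.1 hx
    rw [supported_eq_span_single] at hx'
    refine (Submodule.span_le (p := Subalgebra.toSubmodule (Algebra.adjoin R (of' R M '' S)))).2
      ?_ hx'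
    rintro _ ⟨m, hm, rfl⟩
    rw [SetLike.mem_coe, Subalgebra.mem_toSubmodule]
    induction hm using AddSubmonoid.closure_induction with
    | mem m hm => exact Algebra.subset_adjoin ⟨m, hm, rfl⟩
    | zero => exact one_mem _
    | add a b _ _ ha hb => simpa [single_mul_single] using mul_mem ha hb

theorem add_mem_of_mul_single_mem_supported [IsCancelAdd M] {s : Set M} {x : R[M]} {m p : M}
    (hx : x * single m 1 ∈ supported R R s) (hp : p ∈ x.coeff.support) : p + m ∈ s :=
  hx (by simpa using hp)

end AddMonoidAlgebra

open AddMonoidAlgebra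

def coneSubmonoid : AddSubmonoid (ℕ × ℤ) where
  carrier := {p | p.2.natAbs ≤ p.1}
  add_mem' {p q} hp hq := by
    have := Int.natAbs_add_le p.2 q.2
    simp only [Set.mem_ofPred_eq, Prod.fst_add, Prod.snd_add] at *
    omega
  zero_mem' := by simp

theorem mem_coneSubmonoid {p : ℕ × ℤ} : p ∈ coneSubmonoid ↔ p.2.natAbs ≤ p.1 :=
  Iff.rfl

theorem mem_coneSubmonoid_of_add_mem {p : ℕ × ℤ} (h_pos : p + (1, 1) ∈ coneSubmonoid)
    (h_neg : p + (1, -1) ∈ coneSubmonoid) : p ∈ coneSubmonoid := by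
  simp only [mem_coneSubmonoid, Prod.fst_add, Prod.snd_add] at *
  omega

theorem closure_eq_coneSubmonoid :
    AddSubmonoid.closure {(1, 0), (1, 1), (1, -1)} = coneSubmonoid := by
  refine le_antisymm (AddSubmonoid.closure_le.2 ?_) fun p hp => ?_
  · rintro _ (rfl | rfl | rfl) <;> simp [mem_coneSubmonoid]
  · have gen {g : ℕ × ℤ} (hg : g ∈ ({(1, 0), (1, 1), (1, -1)} : Set (ℕ × ℤ))) (k : ℕ) :
        k • g ∈ AddSubmonoid.closure {(1, 0), (1, 1), (1, -1)} :=
      nsmul_mem (AddSubmonoid.subset_closure hg) k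
    obtain ⟨n, m⟩ := p
    obtain ⟨k, rfl | rfl⟩ := Int.eq_nat_or_neg m
    all_goals simp only [mem_coneSubmonoid, Int.natAbs_neg, Int.natAbs_natCast] at hp
    · rw [show ((n, (k : ℤ)) : ℕ × ℤ) = k • (1, 1) + (n - k) • (1, 0) by ext <;> simp; omega]
      exact add_mem (gen (by simp) k) (gen (by simp) _)
    · rw [show ((n, -(k : ℤ)) : ℕ × ℤ) = k • (1, -1) + (n - k) • (1, 0) by ext <;> simp; omega]
      exact add_mem (gen (by simp) k) (gen (by simp) _)

theorem coneA_eq_supportedSubalgebra : coneA = supportedSubalgebra ℂ coneSubmonoid := by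
  rw [← closure_eq_coneSubmonoid, ← adjoin_of'_eq_supportedSubalgebra]
  simp [coneA, mono, Set.image_insert_eq, of'_apply]

theorem mem_coneA {x : PolyLaurent} :
    x ∈ coneA ↔ x ∈ supported ℂ ℂ (coneSubmonoid : Set (ℕ × ℤ)) := by
  rw [coneA_eq_supportedSubalgebra, mem_supportedSubalgebra]

theorem tdt_single (p : ℕ × ℤ) (c : ℂ) : tdt (single p c) = (p.2 : ℂ) • single p c := by
  simp [tdt, lsingle_apply]

theorem coeff_tdt (x : PolyLaurent) (p : ℕ × ℤ) : (tdt x).coeff p = p.2 * x.coeff p := by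
  induction x using induction_linear with
  | zero => simp
  | add x y hx hy => simp [hx, hy, mul_add]
  | single q c =>
    rw [tdt_single, coeff_smul, coeff_single, Finsupp.smul_apply, Finsupp.single_apply]
    split_ifs with h <;> simp [h]

theorem tdt_mem_supported {s : Set (ℕ × ℤ)} {x : PolyLaurent} (hx : x ∈ supported ℂ ℂ s) :
    tdt x ∈ supported ℂ ℂ s :=
  mem_supported'.2 fun p hp => by simp [coeff_tdt, mem_supported'.1 hx p hp]

/-- **Derivations of the cone, part 2.**
For `q ∈ ℂ[u, t, t⁻¹]`, the operator `q·(t∂_t)` maps `A` into `A` if and only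
if `q ∈ A`. -/
theorem cone_derivations_tdt (q : PolyLaurent) :
    (∀ a ∈ coneA, q * tdt a ∈ coneA) ↔ q ∈ coneA := by
  refine ⟨fun h => ?_, fun hq a ha =>
    mul_mem hq (mem_coneA.2 (tdt_mem_supported (mem_coneA.1 ha)))⟩
  have h_pos : q * mono 1 1 ∈ coneA := by
    simpa [mono, tdt_single] using h (mono 1 1) (Algebra.subset_adjoin (by simp))
  have h_neg : q * mono 1 (-1) ∈ coneA := by
    simpa [mono, tdt_single] using h (mono 1 (-1)) (Algebra.subset_adjoin (by simp))
  refine mem_coneA.2 (mem_supported.2 fun p hp => mem_coneSubmonoid_of_add_mem ?_ ?_)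
  · exact add_mem_of_mul_single_mem_supported (mem_coneA.1 h_pos) hp
  · exact add_mem_of_mul_single_mem_supported (mem_coneA.1 h_neg) hp
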